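/- Let d ∈ ℕ, T ∈ ℕ, and let X_1, …, X_T be d × d real symmetric positive semidefinite matrices with tr(X_t) ≤ 1 for every t. Define M_0 = I_{d×d} and M_t = M_{t−1} + X_t for t = 1, …, T. Then ∑_{t=1}^T tr( X_t M_t^{−1} ) ≤ log det(M_T) − d · log 1 ≤ d log(1 + T/d); in particular ∑_{t=1}^T tr( X_t M_t^{−1} ) ≤ log det(M_T) ≤ d log(1 + T/d). -/

import Mathlib

open Matrix Finset

section Aux
variable {d : ℕ}

lemma aux_star_dot {S : Matrix (Fin d) (Fin d) ℝ} (hS : S.IsHermitian) (i : Fin d) :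
    star (⇑(hS.eigenvectorBasis i)) ⬝ᵥ ⇑(hS.eigenvectorBasis i) = 1 := by
  have h1 : ‖hS.eigenvectorBasis i‖ = 1 := hS.eigenvectorBasis.orthonormal.1 i
  have h2 : (inner ℝ (hS.eigenvectorBasis i) (hS.eigenvectorBasis i) : ℝ)
      = star (⇑(hS.eigenvectorBasis i)) ⬝ᵥ ⇑(hS.eigenvectorBasis i) :=
    EuclideanSpace.inner_eq_star_dotProduct _ _
  rw [← h2, real_inner_self_eq_norm_sq, h1, one_pow]

lemma aux_trace_eq {S : Matrix (Fin d) (Fin d) ℝ} (hS : S.IsHermitian) :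
    S.trace = ∑ i, hS.eigenvalues i := by
  nth_rewrite 1 [hS.spectral_theorem]
  rw [Unitary.conjStarAlgAut_apply, Matrix.trace_mul_cycle,
    show (star hS.eigenvectorUnitary.1 : Matrix (Fin d) (Fin d) ℝ) * hS.eigenvectorUnitary.1 = 1
      from Matrix.mem_unitaryGroup_iff'.mp hS.eigenvectorUnitary.2, one_mul, trace_diagonal]
  simp

lemma aux_det_one_sub {S : Matrix (Fin d) (Fin d) ℝ} (hS : S.IsHermitian) :
    (1 - S).det = ∏ i, (1 - hS.eigenvalues i) := by
  set U : Matrix (Fin d) (Fin d) ℝ := hS.eigenvectorUnitary.1 with hUdef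
  have hU : U * star U = 1 := Matrix.mem_unitaryGroup_iff.mp hS.eigenvectorUnitary.2
  have key : (1 : Matrix (Fin d) (Fin d) ℝ) - S
      = U * (1 - diagonal (RCLike.ofReal ∘ hS.eigenvalues)) * star U := by
    rw [mul_sub, sub_mul, mul_one, hU, hUdef,
      ← Unitary.conjStarAlgAut_apply (S := ℝ), ← hS.spectral_theorem]
  rw [key, det_mul, det_mul, mul_comm, ← mul_assoc, ← det_mul,
    Matrix.mem_unitaryGroup_iff'.mp hS.eigenvectorUnitary.2, det_one, one_mul]
  rw [show (1 : Matrix (Fin d) (Fin d) ℝ) - diagonal (RCLike.ofReal ∘ hS.eigenvalues)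
    = diagonal (fun i => 1 - hS.eigenvalues i) by
      rw [← diagonal_one, diagonal_sub]; rfl]
  rw [det_diagonal]

open scoped MatrixOrder in
lemma aux_step {A B : Matrix (Fin d) (Fin d) ℝ} (hA : A.PosDef) (hB : B.PosSemidef) :
    (B * (A + B)⁻¹).trace ≤ Real.log (A + B).det - Real.log A.det := by
  have hM : (A + B).PosDef := hA.add_posSemidef hB
  set M := A + B with hMdef
  set R := CFC.sqrt M with hRdef
  have hR : R.PosSemidef := (CFC.sqrt_nonneg M).posSemidef
  have hRR : R * R = M := CFC.sqrt_mul_sqrt_self M hM.posSemidef.nonneg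
  have hdetM : 0 < M.det := hM.det_pos
  have hdetR : R.det * R.det = M.det := by rw [← det_mul, hRR]
  have hdetRne : R.det ≠ 0 := by
    intro h; rw [h, mul_zero] at hdetR; exact hdetM.ne' hdetR.symm
  have hRunit : IsUnit R.det := hdetRne.isUnit
  have hRinvR : R⁻¹ * R = 1 := nonsing_inv_mul R hRunit
  have hRRinv : R * R⁻¹ = 1 := mul_nonsing_inv R hRunit
  have hRinvH : (R⁻¹).IsHermitian := hR.1.inv
  set S := R⁻¹ * B * R⁻¹ with hSdef
  have hS : S.PosSemidef := by
    have := hB.mul_mul_conjTranspose_same R⁻¹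
    rwa [hRinvH.eq] at this
  have htr : (B * M⁻¹).trace = S.trace := by
    have hMinv : M⁻¹ = R⁻¹ * R⁻¹ := by rw [← hRR, Matrix.mul_inv_rev]
    rw [hMinv, hSdef, ← Matrix.mul_assoc, Matrix.trace_mul_cycle]
  have hone : (1 : Matrix (Fin d) (Fin d) ℝ) - S = R⁻¹ * A * R⁻¹ := by
    have h2 : R⁻¹ * A * R⁻¹ + S = 1 := by
      rw [hSdef, ← add_mul, ← mul_add, ← hMdef, ← hRR,
        ← Matrix.mul_assoc R⁻¹ R R, hRinvR, one_mul, hRRinv]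
    rw [← h2]; abel
  have h1S : ((1 : Matrix (Fin d) (Fin d) ℝ) - S).PosSemidef := by
    rw [hone]
    have := hA.posSemidef.mul_mul_conjTranspose_same R⁻¹
    rwa [hRinvH.eq] at this
  have hApos := hA.det_pos
  have hdet1S : (1 - S).det = A.det / M.det := by
    rw [hone, det_mul, det_mul, det_nonsing_inv, ← hdetR]
    field_simp
    rw [← mul_pow, Ring.inverse_mul_cancel _ hRunit, one_pow]
  set μ := hS.1.eigenvalues with hμdef
  have h1μ : ∀ i, 0 ≤ 1 - μ i := by
    intro i
    have hv := h1S.dotProduct_mulVec_nonneg (⇑(hS.1.eigenvectorBasis i))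
    rw [sub_mulVec, one_mulVec, hS.1.mulVec_eigenvectorBasis, dotProduct_sub,
      dotProduct_smul, aux_star_dot hS.1] at hv
    simpa using hv
  have hprod : ∏ i, (1 - μ i) = A.det / M.det := by
    rw [← aux_det_one_sub hS.1, hdet1S]
  have hposprod : 0 < ∏ i, (1 - μ i) := hprod ▸ div_pos hApos hdetM
  have h1μpos : ∀ i, 0 < 1 - μ i := by
    intro i
    rcases (h1μ i).lt_or_eq with h | h
    · exact h
    · exact absurd (Finset.prod_eq_zero (mem_univ i) h.symm) hposprod.ne'
  have key : S.trace ≤ Real.log M.det - Real.log A.det := by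
    rw [aux_trace_eq hS.1]
    calc ∑ i, μ i ≤ ∑ i, -Real.log (1 - μ i) := by
          refine Finset.sum_le_sum fun i _ => ?_
          have := Real.log_le_sub_one_of_pos (h1μpos i)
          linarith
      _ = - Real.log (∏ i, (1 - μ i)) := by
          rw [Real.log_prod (fun i _ => (h1μpos i).ne'), ← Finset.sum_neg_distrib]
      _ = Real.log M.det - Real.log A.det := by
          rw [hprod, Real.log_div hApos.ne' hdetM.ne']; ring
  rw [htr]; exact key

end Aux

section Main

lemma aux_trace_nonneg {d : ℕ} {A : Matrix (Fin d) (Fin d) ℝ} (hA : A.PosSemidef) :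
    0 ≤ A.trace := by
  rw [aux_trace_eq hA.1]
  exact Finset.sum_nonneg fun i _ => hA.eigenvalues_nonneg i

lemma aux_sum_psd {d : ℕ} (X : ℕ → Matrix (Fin d) (Fin d) ℝ) (t : ℕ)
    (h : ∀ i < t, (X i).PosSemidef) :
    (∑ i ∈ Finset.range t, X i).PosSemidef := by
  induction t with
  | zero => simpa using Matrix.PosSemidef.zero
  | succ n ih =>
    rw [Finset.sum_range_succ]
    exact (ih fun i hi => h i (hi.trans (Nat.lt_succ_self n))).add (h n (Nat.lt_succ_self n))




/-- **telescoping step of the elliptical potential lemma.** For symmetric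
positive semidefinite matrices `X 0, …, X (T-1)` with trace at most 1, and partial sums
`M t = I + ∑_{i < t} X i`, we have
`∑_{t < T} tr (X t * (M (t+1))⁻¹) ≤ log det (M T) - d log 1 ≤ d log (1 + T/d)`; in
particular `∑_{t < T} tr (X t * (M (t+1))⁻¹) ≤ log det (M T) ≤ d log (1 + T/d)`. -/
theorem stmt16 (d T : ℕ) (X : ℕ → Matrix (Fin d) (Fin d) ℝ)
    (hX : ∀ t < T, (X t).PosSemidef) (htr : ∀ t < T, (X t).trace ≤ 1) :
    (∑ t ∈ Finset.range T,
        (X t * ((1 : Matrix (Fin d) (Fin d) ℝ) + ∑ i ∈ Finset.range (t + 1), X i)⁻¹).trace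
      ≤ Real.log ((1 : Matrix (Fin d) (Fin d) ℝ) + ∑ i ∈ Finset.range T, X i).det
          - d * Real.log 1) ∧
    (Real.log ((1 : Matrix (Fin d) (Fin d) ℝ) + ∑ i ∈ Finset.range T, X i).det
        - d * Real.log 1 ≤ d * Real.log (1 + T / d)) ∧
    (∑ t ∈ Finset.range T,
        (X t * ((1 : Matrix (Fin d) (Fin d) ℝ) + ∑ i ∈ Finset.range (t + 1), X i)⁻¹).trace
      ≤ Real.log ((1 : Matrix (Fin d) (Fin d) ℝ) + ∑ i ∈ Finset.range T, X i).det) ∧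
    (Real.log ((1 : Matrix (Fin d) (Fin d) ℝ) + ∑ i ∈ Finset.range T, X i).det
      ≤ d * Real.log (1 + T / d)) := by
  set M : ℕ → Matrix (Fin d) (Fin d) ℝ :=
    fun t => (1 : Matrix (Fin d) (Fin d) ℝ) + ∑ i ∈ Finset.range t, X i with hMdef
  have hMpd : ∀ t ≤ T, (M t).PosDef := fun t ht =>
    Matrix.PosDef.add_posSemidef Matrix.PosDef.one
      (aux_sum_psd X t fun i hi => hX i (lt_of_lt_of_le hi ht))
  -- Part 1 : telescoping
  have part1 : ∑ t ∈ Finset.range T,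
      (X t * ((1 : Matrix (Fin d) (Fin d) ℝ) + ∑ i ∈ Finset.range (t + 1), X i)⁻¹).trace
      ≤ Real.log (M T).det := by
    have hstep : ∀ t < T,
        (X t * (M (t + 1))⁻¹).trace ≤ Real.log (M (t + 1)).det - Real.log (M t).det := by
      intro t ht
      have hsucc : M (t + 1) = M t + X t := by
        simp only [hMdef, Finset.sum_range_succ, add_assoc]
      rw [hsucc]
      exact aux_step (hMpd t ht.le) (hX t ht)
    calc ∑ t ∈ Finset.range T,
        (X t * ((1 : Matrix (Fin d) (Fin d) ℝ) + ∑ i ∈ Finset.range (t + 1), X i)⁻¹).trace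
        ≤ ∑ t ∈ Finset.range T, (Real.log (M (t + 1)).det - Real.log (M t).det) :=
          Finset.sum_le_sum fun t ht => hstep t (Finset.mem_range.mp ht)
      _ = Real.log (M T).det - Real.log (M 0).det :=
          Finset.sum_range_sub (fun t => Real.log (M t).det) T
      _ = Real.log (M T).det := by
          simp [hMdef]
  -- Part 2 : AM-GM bound
  have part2 : Real.log (M T).det ≤ d * Real.log (1 + T / d) := by
    rcases Nat.eq_zero_or_pos d with hd | hd
    · subst hd
      simp [Matrix.det_fin_zero]
    have hdR : (0 : ℝ) < d := by exact_mod_cast hd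
    have hN : (M T).PosDef := hMpd T le_rfl
    set μ := hN.1.eigenvalues with hμdef
    have hμpos : ∀ i, 0 < μ i := hN.eigenvalues_pos
    have hlogdet : Real.log (M T).det = ∑ i, Real.log (μ i) := by
      have : (M T).det = ∏ i, μ i := by
        rw [hN.1.det_eq_prod_eigenvalues]; norm_num; rfl
      rw [this, Real.log_prod fun i _ => (hμpos i).ne']
    -- Jensen
    have hw : ∑ _i : Fin d, (d : ℝ)⁻¹ = 1 := by
      rw [Finset.sum_const, Finset.card_univ, Fintype.card_fin, nsmul_eq_mul,
        mul_inv_cancel₀ hdR.ne']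
    have hjensen : ∑ i, (d : ℝ)⁻¹ • Real.log (μ i)
        ≤ Real.log (∑ i, (d : ℝ)⁻¹ • μ i) :=
      (strictConcaveOn_log_Ioi.concaveOn).le_map_sum
        (fun i _ => by positivity) hw (fun i _ => hμpos i)
    have htraceμ : (M T).trace = ∑ i, μ i := aux_trace_eq hN.1
    have htrace_le : (M T).trace ≤ d + T := by
      have : (M T).trace = d + ∑ i ∈ Finset.range T, (X i).trace := by
        simp [hMdef, Matrix.trace_add, Matrix.trace_one, Matrix.trace_sum]
      rw [this]
      have : ∑ i ∈ Finset.range T, (X i).trace ≤ ∑ i ∈ Finset.range T, (1 : ℝ) :=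
        Finset.sum_le_sum fun i hi => htr i (Finset.mem_range.mp hi)
      simpa using this
    have htrace_pos : (0 : ℝ) < (M T).trace := by
      have : (M T).trace = d + ∑ i ∈ Finset.range T, (X i).trace := by
        simp [hMdef, Matrix.trace_add, Matrix.trace_one, Matrix.trace_sum]
      rw [this]
      have h0 : (0:ℝ) ≤ ∑ i ∈ Finset.range T, (X i).trace :=
        Finset.sum_nonneg fun i hi => aux_trace_nonneg (hX i (Finset.mem_range.mp hi))
      linarith
    have hfinal : Real.log (M T).det ≤ d * Real.log ((M T).trace / d) := by
      rw [hlogdet]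
      have h1 : ∑ i, Real.log (μ i) = d * ∑ i, (d : ℝ)⁻¹ • Real.log (μ i) := by
        rw [Finset.mul_sum]
        refine Finset.sum_congr rfl fun i _ => ?_
        rw [smul_eq_mul, ← mul_assoc, mul_inv_cancel₀ hdR.ne', one_mul]
      have h2 : ∑ i, (d : ℝ)⁻¹ • μ i = (M T).trace / d := by
        rw [htraceμ, div_eq_inv_mul, Finset.mul_sum]
        exact Finset.sum_congr rfl fun i _ => by rw [smul_eq_mul]
      rw [h1]
      have := hjensen
      rw [h2] at this
      exact mul_le_mul_of_nonneg_left this hdR.le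
    refine hfinal.trans ?_
    refine mul_le_mul_of_nonneg_left ?_ hdR.le
    refine Real.log_le_log (by positivity) ?_
    rw [div_le_iff₀ hdR, add_mul, one_mul, div_mul_cancel₀ _ hdR.ne']
    linarith [htrace_le]
  refine ⟨?_, ?_, ?_, ?_⟩
  · simpa using part1
  · simpa using part2
  · exact part1
  · exact part2
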